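/- Let φ ∈ 𝒮(ℝ^N), ‖φ‖ = 1, and ψ ∈ 𝒮(ℝ^N). The intertwining relations (x_j/2 + iħ ∂/∂p_j) U_φψ = U_φ(x_j ψ) and (p_j/2 − iħ ∂/∂x_j) U_φψ = U_φ(−iħ ∂ψ/∂x_j) hold for 1 ≤ j ≤ N. -/

import Mathlib

/-
Write `U_φψ(x, p) = c · e^{ip·x/(2ħ)} · V_φψ(x, p)` with
`V_φψ(x, p) = ∫ e^{-ip·x'/ħ} ψ(x') φ(x - x') dx'`.

Differentiating `V_φψ` in `p_j` under the integral sign (dominated by `|x'| |ψ(x')|`) brings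
down `-i x'_j / ħ`, so `iħ ∂_{p_j} V_φψ = V_φ(x_j ψ)`, while `iħ ∂_{p_j}` of the prefactor
produces `-x_j/2 · U_φψ`, which cancels the term `x_j/2 · U_φψ`.

For the derivative in `x_j`, the substitution `x' = x - u` moves `x` from the window onto `ψ`:
`V_φψ(x, p) = e^{-ip·x/ħ} ∫ e^{ip·u/ħ} φ(u) ψ(x - u) du`. Now `∂_{x_j}` falls on `ψ` (dominated by
`sup |∂_j ψ| · |φ(u)|`), and `-iħ ∂_{x_j}` of the combined phase `e^{-ip·x/(2ħ)}` gives `-p_j/2`,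
which cancels the term `p_j/2 · U_φψ`.
-/

open MeasureTheory Complex Real

/-- The Wigner wave-packet transform `U_φ`. -/
noncomputable def wavePacket (N : ℕ) (ℏ : ℝ) (φ ψ : (Fin N → ℝ) → ℂ)
    (x p : Fin N → ℝ) : ℂ :=
  ((2 * Real.pi * ℏ) ^ (-(N : ℝ) / 2) : ℝ) *
    Complex.exp (Complex.I * (∑ i, p i * x i) / (2 * ℏ)) *
    ∫ x' : Fin N → ℝ,
      Complex.exp (-Complex.I * (∑ i, p i * x' i) / ℏ) * ψ x' * φ (x - x')

theorem hasDerivAt_integral_cexp_mul_I_mul {α : Type*} [MeasurableSpace α] {μ : Measure α}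
    {ℓ : α → ℝ} {g : α → ℂ} (hℓ : AEStronglyMeasurable ℓ μ) (hg : Integrable g μ)
    (hℓg : Integrable (fun a => (ℓ a : ℂ) * g a) μ) (s₀ : ℝ) :
    HasDerivAt (fun s : ℝ => ∫ a, cexp (↑(s * ℓ a) * I) * g a ∂μ)
      (∫ a, ℓ a * I * cexp (↑(s₀ * ℓ a) * I) * g a ∂μ) s₀ := by
  have hphase : ∀ s : ℝ, AEStronglyMeasurable (fun a => cexp (↑(s * ℓ a) * I)) μ := fun s =>
    (by fun_prop : Continuous fun r : ℝ => cexp (↑(s * r) * I)).comp_aestronglyMeasurable hℓ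
  refine (hasDerivAt_integral_of_dominated_loc_of_deriv_le
    (F := fun s a => cexp (↑(s * ℓ a) * I) * g a)
    (F' := fun s a => ℓ a * I * cexp (↑(s * ℓ a) * I) * g a) (x₀ := s₀)
    (bound := fun a => ‖(ℓ a : ℂ) * g a‖) Filter.univ_mem
    (Filter.Eventually.of_forall fun s => (hphase s).fun_mul hg.1) ?_ ?_ ?_ hℓg.norm ?_).2
  · exact hg.bdd_mul (hphase s₀) (Filter.Eventually.of_forall fun a => (norm_exp_ofReal_mul_I _).le)
  · exact ((by fun_prop : Continuous fun r : ℝ => (r : ℂ) * I * cexp (↑(s₀ * r) * I))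
      |>.comp_aestronglyMeasurable hℓ).fun_mul hg.1
  · refine Filter.Eventually.of_forall fun a s _ => le_of_eq ?_
    simp only [norm_mul, norm_I, norm_exp_ofReal_mul_I, mul_one]
  · refine Filter.Eventually.of_forall fun a s _ => ?_
    have h := (((hasDerivAt_id (s : ℂ)).mul_const (ℓ a : ℂ)).mul_const I).cexp.comp_ofReal.mul_const
      (g a)
    simp only [id, one_mul, ← ofReal_mul] at h
    exact h.congr_deriv (by ring)

section Update

variable {ι : Type*} [Fintype ι] [DecidableEq ι]

theorem sum_update_mul {R : Type*} [CommRing R] (p x : ι → R) (j : ι) (s : R) :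
    ∑ i, Function.update p j s i * x i = ∑ i, p i * x i + (s - p j) * x j := by
  simp only [Function.update_apply, ite_mul, Finset.sum_ite, Finset.filter_eq', Finset.filter_ne',
    Finset.mem_univ, if_true, Finset.sum_singleton]
  rw [← Finset.sum_erase_add _ _ (Finset.mem_univ j)]
  ring

theorem hasDerivAt_sum_update_mul (p x : ι → ℝ) (j : ι) :
    HasDerivAt (fun s => ∑ i, Function.update p j s i * x i) (x j) (p j) := by
  simp only [sum_update_mul]
  simpa using (((hasDerivAt_id (p j)).sub_const (p j)).mul_const (x j)).const_add
    (∑ i, p i * x i)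

theorem hasDerivAt_sum_mul_update (p x : ι → ℝ) (j : ι) :
    HasDerivAt (fun s => ∑ i, p i * Function.update x j s i) (p j) (x j) := by
  simpa only [mul_comm (p _)] using hasDerivAt_sum_update_mul x p j

theorem deriv_comp_update {F : Type*} [NormedAddCommGroup F] [NormedSpace ℝ F]
    {f : (ι → ℝ) → F} {x : ι → ℝ} (hf : DifferentiableAt ℝ f x) (j : ι) :
    deriv (fun s => f (Function.update x j s)) (x j) = fderiv ℝ f x (Pi.single j 1) := by
  rw [← Function.update_eq_self j x] at hf
  simpa only [Function.update_eq_self, Function.comp_def] using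
    (hf.hasFDerivAt.comp_hasDerivAt (x j) (hasDerivAt_update x j (x j))).deriv

theorem hasDerivAt_integral_mul_comp_update_sub {g : (ι → ℝ) → ℂ} (hg : Integrable g)
    (ψ : SchwartzMap (ι → ℝ) ℂ) (y : ι → ℝ) (j : ι) :
    HasDerivAt (fun s => ∫ u, g u * ψ (Function.update y j s - u))
      (∫ u, g u * fderiv ℝ ψ (y - u) (Pi.single j 1)) (y j) := by
  set C := SchwartzMap.seminorm ℝ 0 0 (SchwartzMap.fderivCLM ℝ _ ℂ ψ)
  have hC : ∀ z, ‖fderiv ℝ ψ z‖ ≤ C := fun z => by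
    simpa [SchwartzMap.fderivCLM_apply] using
      SchwartzMap.norm_le_seminorm ℝ (SchwartzMap.fderivCLM ℝ _ ℂ ψ) z
  have hψ' : Continuous (fderiv ℝ ψ) := (ψ.smooth 1).continuous_fderiv one_ne_zero
  have key := hasDerivAt_integral_of_dominated_loc_of_deriv_le
    (F := fun s u => g u * ψ (Function.update y j s - u))
    (F' := fun s u => g u * fderiv ℝ ψ (Function.update y j s - u) (Pi.single j 1))
    (x₀ := y j) (bound := fun u => ‖g u‖ * (C * ‖(Pi.single j 1 : ι → ℝ)‖)) Filter.univ_mem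
    (Filter.Eventually.of_forall fun s => hg.1.fun_mul (by fun_prop : Continuous fun u =>
      ψ (Function.update y j s - u)).aestronglyMeasurable)
    (hg.mul_bdd (by fun_prop : Continuous fun u =>
      ψ (Function.update y j (y j) - u)).aestronglyMeasurable
      (Filter.Eventually.of_forall fun u => ψ.norm_le_seminorm ℝ _))
    (hg.1.fun_mul (by fun_prop : Continuous fun u =>
      fderiv ℝ ψ (Function.update y j (y j) - u) (Pi.single j 1)).aestronglyMeasurable)
    (Filter.Eventually.of_forall fun u s _ => by
      rw [norm_mul]
      gcongr
      exact (ContinuousLinearMap.le_opNorm _ _).trans (by gcongr; exact hC _))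
    (hg.norm.mul_const _)
    (Filter.Eventually.of_forall fun u s _ =>
      ((ψ.differentiableAt.hasFDerivAt.comp_hasDerivAt s
        ((hasDerivAt_update y j s).sub_const u)).const_mul (g u)))
  simpa only [Function.update_eq_self] using key.2

end Update

section ShortTimeFourier

variable {ι : Type*} [Fintype ι]

theorem SchwartzMap.integrable_coord_mul (ψ : SchwartzMap (ι → ℝ) ℂ) (j : ι) :
    Integrable (fun u : ι → ℝ => (u j : ℂ) * ψ u) := by
  refine (ψ.integrable_pow_mul volume 1).mono' (by fun_prop)
    (Filter.Eventually.of_forall fun u => ?_)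
  rw [norm_mul, norm_real, pow_one]
  gcongr
  exact norm_le_pi_norm u j

noncomputable def shortTimeFourier (ℏ : ℝ) (φ ψ : (ι → ℝ) → ℂ) (x p : ι → ℝ) : ℂ :=
  ∫ x', cexp (-I * ↑(∑ i, p i * x' i) / ℏ) * ψ x' * φ (x - x')

theorem shortTimeFourier_const_mul (ℏ : ℝ) (φ f : (ι → ℝ) → ℂ) (a : ℂ) (x p : ι → ℝ) :
    shortTimeFourier ℏ φ (fun u => a * f u) x p = a * shortTimeFourier ℏ φ f x p := by
  rw [shortTimeFourier, shortTimeFourier, ← integral_const_mul]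
  congr 1; funext u; ring

theorem integrable_shortTimeFourier_integrand (ℏ : ℝ) (φ : SchwartzMap (ι → ℝ) ℂ)
    {f : (ι → ℝ) → ℂ} (hf : Integrable f) (x p : ι → ℝ) :
    Integrable (fun u => cexp (-I * ↑(∑ i, p i * u i) / ℏ) * f u * φ (x - u)) := by
  simp only [mul_right_comm _ (f _)]
  refine hf.bdd_mul (c := SchwartzMap.seminorm ℝ 0 0 φ) (by fun_prop)
    (Filter.Eventually.of_forall fun u => ?_)
  rw [norm_mul, Complex.norm_exp]
  simpa using φ.norm_le_seminorm ℝ (x - u)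

theorem shortTimeFourier_eq_convolution (ℏ : ℝ) (φ ψ : (ι → ℝ) → ℂ) (x p : ι → ℝ) :
    shortTimeFourier ℏ φ ψ x p = cexp (-I * ↑(∑ i, p i * x i) / ℏ) *
      ∫ u, cexp (I * ↑(∑ i, p i * u i) / ℏ) * φ u * ψ (x - u) := by
  rw [shortTimeFourier, ← integral_sub_left_eq_self _ volume x, ← integral_const_mul]
  congr 1; funext u
  simp only [sub_sub_cancel, Pi.sub_apply, mul_sub, Finset.sum_sub_distrib, ofReal_sub]
  rw [mul_comm (cexp _), ← mul_assoc, ← mul_assoc, ← Complex.exp_add]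
  ring_nf

variable [DecidableEq ι]

theorem hasDerivAt_shortTimeFourier_update_momentum (ℏ : ℝ) (φ ψ : SchwartzMap (ι → ℝ) ℂ)
    (x p : ι → ℝ) (j : ι) :
    HasDerivAt (fun s => shortTimeFourier ℏ φ ψ x (Function.update p j s))
      (-(I / ℏ) * shortTimeFourier ℏ φ (fun u => (u j : ℂ) * ψ u) x p) (p j) := by
  set g := fun u : ι → ℝ => cexp (-I * ↑(∑ i, p i * u i) / ℏ) * ψ u * φ (x - u)
  have hg : Integrable g := integrable_shortTimeFourier_integrand ℏ φ ψ.integrable x p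
  have hℓg : Integrable fun u : ι → ℝ => ((-(u j) / ℏ : ℝ) : ℂ) * g u := by
    refine ((integrable_shortTimeFourier_integrand ℏ φ (ψ.integrable_coord_mul j) x p).const_mul
      (-1 / ℏ : ℂ)).congr (Filter.Eventually.of_forall fun u => ?_)
    simp only [g]; push_cast; ring
  have key := (hasDerivAt_integral_cexp_mul_I_mul
    (by fun_prop : Continuous fun u : ι → ℝ => -(u j) / ℏ).aestronglyMeasurable hg hℓg
    (p j - p j)).comp_sub_const (p j) (p j)
  have hfun : (fun s => shortTimeFourier ℏ φ ψ x (Function.update p j s)) =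
      fun s => ∫ u, cexp (↑((s - p j) * (-(u j) / ℏ)) * I) * g u := by
    funext s
    simp only [shortTimeFourier, sum_update_mul]
    congr 1; funext u
    simp only [g]
    rw [← mul_assoc, ← mul_assoc, ← Complex.exp_add]
    congr 3; push_cast; ring
  rw [hfun]
  refine key.congr_deriv ?_
  simp only [sub_self, zero_mul, ofReal_zero, Complex.exp_zero, mul_one, shortTimeFourier, g,
    ← integral_const_mul]
  congr 1; funext u
  push_cast; ring

theorem hasDerivAt_shortTimeFourier_update_position (ℏ : ℝ) (φ ψ : SchwartzMap (ι → ℝ) ℂ)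
    (x p : ι → ℝ) (j : ι) :
    HasDerivAt (fun s => shortTimeFourier ℏ φ ψ (Function.update x j s) p)
      (-(I * p j / ℏ) * shortTimeFourier ℏ φ ψ x p +
        shortTimeFourier ℏ φ (fun u => fderiv ℝ ψ u (Pi.single j 1)) x p) (x j) := by
  set g := fun u : ι → ℝ => cexp (I * ↑(∑ i, p i * u i) / ℏ) * φ u
  have hphase_cont : Continuous fun u : ι → ℝ => cexp (I * ↑(∑ i, p i * u i) / ℏ) := by fun_prop
  have hg : Integrable g := φ.integrable.bdd_mul (c := 1) hphase_cont.aestronglyMeasurable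
    (Filter.Eventually.of_forall fun u => by rw [Complex.norm_exp]; simp)
  have hphase := (((hasDerivAt_sum_mul_update p x j).ofReal_comp.const_mul (-I)).div_const
    (ℏ : ℂ)).cexp
  have hfun : (fun s => shortTimeFourier ℏ φ ψ (Function.update x j s) p) = fun s =>
      cexp (-I * ↑(∑ i, p i * Function.update x j s i) / ℏ) *
        ∫ u, g u * ψ (Function.update x j s - u) :=
    funext fun s => shortTimeFourier_eq_convolution ℏ φ ψ _ p
  rw [hfun]
  refine (hphase.mul (hasDerivAt_integral_mul_comp_update_sub hg ψ x j)).congr_deriv ?_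
  simp only [shortTimeFourier_eq_convolution, Function.update_eq_self, g]
  ring

end ShortTimeFourier

theorem wavePacket_eq (N : ℕ) (ℏ : ℝ) (φ ψ : (Fin N → ℝ) → ℂ) (x p : Fin N → ℝ) :
    wavePacket N ℏ φ ψ x p = ((2 * π * ℏ) ^ (-(N : ℝ) / 2) : ℝ) *
      cexp (I * ↑(∑ i, p i * x i) / (2 * ℏ)) * shortTimeFourier ℏ φ ψ x p :=
  rfl

theorem wavePacket_const_mul (N : ℕ) (ℏ : ℝ) (φ f : (Fin N → ℝ) → ℂ) (a : ℂ)
    (x p : Fin N → ℝ) :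
    wavePacket N ℏ φ (fun u => a * f u) x p = a * wavePacket N ℏ φ f x p := by
  simp only [wavePacket_eq, shortTimeFourier_const_mul]
  ring

theorem hasDerivAt_wavePacket_update_momentum (N : ℕ) (ℏ : ℝ)
    (φ ψ : SchwartzMap (Fin N → ℝ) ℂ) (x p : Fin N → ℝ) (j : Fin N) :
    HasDerivAt (fun s => wavePacket N ℏ φ ψ x (Function.update p j s))
      (I * x j / (2 * ℏ) * wavePacket N ℏ φ ψ x p -
        I / ℏ * wavePacket N ℏ φ (fun u => (u j : ℂ) * ψ u) x p) (p j) := by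
  have hphase := (((hasDerivAt_sum_update_mul p x j).ofReal_comp.const_mul I).div_const
    (2 * ℏ : ℂ)).cexp
  have h := (hphase.const_mul (((2 * π * ℏ) ^ (-(N : ℝ) / 2) : ℝ) : ℂ)).mul
    (hasDerivAt_shortTimeFourier_update_momentum ℏ φ ψ x p j)
  simp only [Function.update_eq_self] at h
  refine h.congr_deriv ?_
  simp only [wavePacket_eq]
  ring

theorem hasDerivAt_wavePacket_update_position (N : ℕ) (ℏ : ℝ)
    (φ ψ : SchwartzMap (Fin N → ℝ) ℂ) (x p : Fin N → ℝ) (j : Fin N) :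
    HasDerivAt (fun s => wavePacket N ℏ φ ψ (Function.update x j s) p)
      (-(I * p j / (2 * ℏ)) * wavePacket N ℏ φ ψ x p +
        wavePacket N ℏ φ (fun u => fderiv ℝ ψ u (Pi.single j 1)) x p) (x j) := by
  have hphase := (((hasDerivAt_sum_mul_update p x j).ofReal_comp.const_mul I).div_const
    (2 * ℏ : ℂ)).cexp
  have h := (hphase.const_mul (((2 * π * ℏ) ^ (-(N : ℝ) / 2) : ℝ) : ℂ)).mul
    (hasDerivAt_shortTimeFourier_update_position ℏ φ ψ x p j)
  simp only [Function.update_eq_self] at h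
  refine h.congr_deriv ?_
  simp only [wavePacket_eq]
  ring

theorem wavePacket_intertwining_general (N : ℕ) (ℏ : ℝ) (hℏ : 0 < ℏ)
    (φ : SchwartzMap (Fin N → ℝ) ℂ)
    (ψ : SchwartzMap (Fin N → ℝ) ℂ) (j : Fin N) (x p : Fin N → ℝ) :
    ((x j / 2 : ℝ) * wavePacket N ℏ (⇑φ) (⇑ψ) x p +
        Complex.I * ℏ *
          deriv (fun s => wavePacket N ℏ (⇑φ) (⇑ψ) x (Function.update p j s)) (p j) =
      wavePacket N ℏ (⇑φ) (fun u => (u j : ℂ) * ψ u) x p) ∧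
    ((p j / 2 : ℝ) * wavePacket N ℏ (⇑φ) (⇑ψ) x p -
        Complex.I * ℏ *
          deriv (fun s => wavePacket N ℏ (⇑φ) (⇑ψ) (Function.update x j s) p) (x j) =
      wavePacket N ℏ (⇑φ)
        (fun u => -Complex.I * ℏ * deriv (fun s => ψ (Function.update u j s)) (u j)) x p) := by
  have hℏ' : (ℏ : ℂ) * (ℏ : ℂ)⁻¹ = 1 := mul_inv_cancel₀ (ofReal_ne_zero.mpr hℏ.ne')
  set U := wavePacket N ℏ φ ψ x p
  refine ⟨?_, ?_⟩
  · rw [(hasDerivAt_wavePacket_update_momentum N ℏ φ ψ x p j).deriv]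
    set U' := wavePacket N ℏ φ (fun u => (u j : ℂ) * ψ u) x p
    push_cast
    linear_combination ((x j / 2 * U - U') * ℏ * ℏ⁻¹) * I_sq - (x j / 2 * U - U') * hℏ'
  · have hpartial : ∀ u, deriv (fun s => ψ (Function.update u j s)) (u j) =
        fderiv ℝ ψ u (Pi.single j 1) := fun u => deriv_comp_update ψ.differentiableAt j
    rw [(hasDerivAt_wavePacket_update_position N ℏ φ ψ x p j).deriv]
    simp only [hpartial, wavePacket_const_mul]
    push_cast
    linear_combination (p j / 2 * U * ℏ * ℏ⁻¹) * I_sq - (p j / 2 * U) * hℏ'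

/-- Intertwining relations: `(x_j/2 + iħ∂/∂p_j)U_φψ = U_φ(x_jψ)` and
`(p_j/2 − iħ∂/∂x_j)U_φψ = U_φ(−iħ∂ψ/∂x_j)`. -/
theorem wavePacket_intertwining (N : ℕ) (ℏ : ℝ) (hℏ : 0 < ℏ)
    (φ : SchwartzMap (Fin N → ℝ) ℂ) (hφ : ∫ x : Fin N → ℝ, ‖φ x‖ ^ 2 = 1)
    (ψ : SchwartzMap (Fin N → ℝ) ℂ) (j : Fin N) (x p : Fin N → ℝ) :
    ((x j / 2 : ℝ) * wavePacket N ℏ (⇑φ) (⇑ψ) x p +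
        Complex.I * ℏ *
          deriv (fun s => wavePacket N ℏ (⇑φ) (⇑ψ) x (Function.update p j s)) (p j) =
      wavePacket N ℏ (⇑φ) (fun u => (u j : ℂ) * ψ u) x p) ∧
    ((p j / 2 : ℝ) * wavePacket N ℏ (⇑φ) (⇑ψ) x p -
        Complex.I * ℏ *
          deriv (fun s => wavePacket N ℏ (⇑φ) (⇑ψ) (Function.update x j s) p) (x j) =
      wavePacket N ℏ (⇑φ)
        (fun u => -Complex.I * ℏ * deriv (fun s => ψ (Function.update u j s)) (u j)) x p) :=
  wavePacket_intertwining_general N ℏ hℏ φ ψ j x p
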